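/- arXiv:1908.10216 — 3 statements merged into one kernel-verified Lean document; each statement's English description precedes it below -/
import Mathlib

section
/- Let α = (3/5, 4/5; −4/5, 3/5) acting on (ℤ[1/5])² as a group automorphism. Then the semidirect product Λ = (ℤ[1/5])² ⋊_α ℤ is finitely generated; in fact it is generated by the generator of the ℤ-factor together with the two standard basis vectors (1,0) and (0,1) of (ℤ[1/5])². -/
/-- The standard copy of `(ℤ[1/5])²` inside `ℚ × ℚ`. -/
def Z5sq : AddSubgroup (ℚ × ℚ) where
  carrier := {p | ∃ (a b : ℤ) (n : ℕ), p.1 = (a : ℚ) / 5 ^ n ∧ p.2 = (b : ℚ) / 5 ^ n}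
  zero_mem' := ⟨0, 0, 0, by norm_num, by norm_num⟩
  add_mem' := by
    rintro p q ⟨a, b, n, h1, h2⟩ ⟨c, d, m, h3, h4⟩
    refine ⟨a * 5 ^ m + c * 5 ^ n, b * 5 ^ m + d * 5 ^ n, n + m, ?_, ?_⟩ <;>
      · simp only [Prod.fst_add, Prod.snd_add, h1, h2, h3, h4]
        push_cast
        rw [pow_add]
        field_simp
  neg_mem' := by
    rintro p ⟨a, b, n, h1, h2⟩
    exact ⟨-a, -b, n, by simp [h1, neg_div], by simp [h2, neg_div]⟩

/-- `(1, 0)` belongs to `(ℤ[1/5])²`. -/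
theorem one_zero_mem : ((1 : ℚ), (0 : ℚ)) ∈ Z5sq := ⟨1, 0, 0, by norm_num, by norm_num⟩

/-- `(0, 1)` belongs to `(ℤ[1/5])²`. -/
theorem zero_one_mem : ((0 : ℚ), (1 : ℚ)) ∈ Z5sq := ⟨0, 1, 0, by norm_num, by norm_num⟩

/-! Let `α` be the action of the generator `t`. By Cayley–Hamilton (trace `6/5`, determinant `1`)
`α + α⁻¹ = 6/5`, so `α (5 • w) + α⁻¹ (5 • w) - 5 • w = w`. The vectors whose image in `Λ` lies in
the subgroup generated by `t`, `(1,0)` and `(0,1)` thus form a subgroup of `(ℤ[1/5])²` that contains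
`(1,0)` and `(0,1)` and is closed under division by `5`, so it is everything. -/

namespace SemidirectProduct

variable {N G : Type*} [Group N] [Group G] {φ : G →* MulAut N} {H : Subgroup (N ⋊[φ] G)}
  {g : G} {n : N}

theorem inl_aut_mem (hg : inr g ∈ H) (hn : inl n ∈ H) : inl (φ g n) ∈ H := by
  rw [inl_aut, map_inv]
  exact H.mul_mem (H.mul_mem hg hn) (H.inv_mem hg)

theorem inl_aut_inv_mem (hg : inr g ∈ H) (hn : inl n ∈ H) : inl ((φ g)⁻¹ n) ∈ H := by
  rw [inl_aut_inv, map_inv]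
  exact H.mul_mem (H.mul_mem (H.inv_mem hg) hn) hg

theorem eq_top_of_inl_mem_of_inr_mem (hN : ∀ n, inl n ∈ H) (hG : ∀ g, inr g ∈ H) : H = ⊤ :=
  eq_top_iff.2 fun x _ => inl_left_mul_inr_right x ▸ H.mul_mem (hN x.left) (hG x.right)

end SemidirectProduct

namespace Z5sq

theorem eq_top_of_five_nsmul_mem {K : AddSubgroup Z5sq} (h10 : ⟨(1, 0), one_zero_mem⟩ ∈ K)
    (h01 : ⟨(0, 1), zero_one_mem⟩ ∈ K) (hdiv : ∀ w : Z5sq, 5 • w ∈ K → w ∈ K) : K = ⊤ := by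
  have hdiv_pow : ∀ (n : ℕ) (w : Z5sq), 5 ^ n • w ∈ K → w ∈ K := by
    intro n
    induction n with
    | zero => simp
    | succ n ih => exact fun w hw => hdiv w (ih _ (by rwa [← mul_smul, ← pow_succ]))
  refine eq_top_iff.2 fun v _ => ?_
  obtain ⟨a, b, n, ha, hb⟩ := v.2
  apply hdiv_pow n
  have hv : 5 ^ n • v = a • (⟨(1, 0), one_zero_mem⟩ : Z5sq) + b • ⟨(0, 1), zero_one_mem⟩ := by
    ext <;> simp [ha, hb, mul_div_cancel₀]
  rw [hv]
  exact K.add_mem (K.zsmul_mem h10 a) (K.zsmul_mem h01 b)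

theorem add_symm_sub_five_nsmul_of_rotation {σ : Z5sq ≃+ Z5sq}
    (hσ : ∀ v : Z5sq, (σ v : ℚ × ℚ) = (3/5 * (v : ℚ × ℚ).1 + 4/5 * (v : ℚ × ℚ).2,
      -(4/5) * (v : ℚ × ℚ).1 + 3/5 * (v : ℚ × ℚ).2)) (w : Z5sq) :
    σ (5 • w) + σ.symm (5 • w) - 5 • w = w := by
  have hsymm (v : Z5sq) : (σ.symm v : ℚ × ℚ) = (3/5 * (v : ℚ × ℚ).1 - 4/5 * (v : ℚ × ℚ).2,
      4/5 * (v : ℚ × ℚ).1 + 3/5 * (v : ℚ × ℚ).2) := by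
    obtain ⟨h1, h2⟩ := Prod.ext_iff.1 (σ.apply_symm_apply v ▸ hσ (σ.symm v))
    ext <;> dsimp only <;> linarith
  ext <;> simp [hσ, hsymm] <;> ring

end Z5sq

/-- Let `α = (3/5, 4/5; −4/5, 3/5)` act on `(ℤ[1/5])²`, and let
`Λ = (ℤ[1/5])² ⋊_α ℤ` be the corresponding semidirect product (here `φ` is the action of
`ℤ` on `(ℤ[1/5])²` whose generator acts by `α`).  Then `Λ` is finitely generated; in fact
it is generated by the generator `t` of the `ℤ`-factor together with the standard basis
vectors `(1,0)` and `(0,1)` of `(ℤ[1/5])²`. -/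
theorem stmt3
    (φ : Multiplicative ℤ →* MulAut (Multiplicative Z5sq))
    (hφ : ∀ v : Z5sq,
      ((Multiplicative.toAdd (φ (Multiplicative.ofAdd (1 : ℤ)) (Multiplicative.ofAdd v))
        : Z5sq) : ℚ × ℚ) =
      (3/5 * (v : ℚ × ℚ).1 + 4/5 * (v : ℚ × ℚ).2,
        -(4/5) * (v : ℚ × ℚ).1 + 3/5 * (v : ℚ × ℚ).2)) :
    Group.FG (Multiplicative Z5sq ⋊[φ] Multiplicative ℤ) ∧
    Subgroup.closure
      {SemidirectProduct.inr (Multiplicative.ofAdd (1 : ℤ)),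
        SemidirectProduct.inl (Multiplicative.ofAdd (⟨((1 : ℚ), (0 : ℚ)), one_zero_mem⟩ : Z5sq)),
        SemidirectProduct.inl (Multiplicative.ofAdd (⟨((0 : ℚ), (1 : ℚ)), zero_one_mem⟩ : Z5sq))} =
      (⊤ : Subgroup (Multiplicative Z5sq ⋊[φ] Multiplicative ℤ)) := by
  set H : Subgroup (Multiplicative Z5sq ⋊[φ] Multiplicative ℤ) := Subgroup.closure
    {SemidirectProduct.inr (Multiplicative.ofAdd (1 : ℤ)),
      SemidirectProduct.inl (Multiplicative.ofAdd (⟨((1 : ℚ), (0 : ℚ)), one_zero_mem⟩ : Z5sq)),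
      SemidirectProduct.inl (Multiplicative.ofAdd (⟨((0 : ℚ), (1 : ℚ)), zero_one_mem⟩ : Z5sq))}
  have ht : SemidirectProduct.inr (Multiplicative.ofAdd (1 : ℤ)) ∈ H :=
    Subgroup.subset_closure (.inl rfl)
  let σ : Z5sq ≃+ Z5sq := AddEquiv.toMultiplicative.symm (φ (Multiplicative.ofAdd 1))
  have hK : (H.comap SemidirectProduct.inl).toAddSubgroup' = ⊤ := by
    refine Z5sq.eq_top_of_five_nsmul_mem (Subgroup.subset_closure (.inr (.inl rfl)))
      (Subgroup.subset_closure (.inr (.inr rfl))) fun w hw => ?_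
    rw [← Z5sq.add_symm_sub_five_nsmul_of_rotation (σ := σ) hφ w]
    exact sub_mem (add_mem (SemidirectProduct.inl_aut_mem ht hw)
      (SemidirectProduct.inl_aut_inv_mem ht hw)) hw
  have htop : H = ⊤ := by
    refine SemidirectProduct.eq_top_of_inl_mem_of_inr_mem (fun n => ?_) fun g => ?_
    · simpa using hK.ge (Set.mem_univ (Multiplicative.toAdd n))
    · simpa [← map_zpow, ← ofAdd_zsmul] using H.zpow_mem ht (Multiplicative.toAdd g)
  exact ⟨Group.fg_iff.mpr ⟨_, htop, Set.toFinite _⟩, htop⟩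
end

section
/- Let Γ be a group with an infinite cyclic central subgroup Z ≅ ℤ such that Γ/Z ≅ B * B * B, where B is the Prüfer 2-group ℤ[1/2]/ℤ, and such that the extension 1 → ℤ → Γ → B*B*B → 1 is non-split on the first factor (its class in H²(B*B*B, ℤ) restricts nontrivially to the first factor B). Then Γ has no finite index subgroup Γ₀ that splits as a direct product Γ₀ ≅ ℤ × Γ'. -/
/-- The dyadic rationals `ℤ[1/2]` as an additive subgroup of `ℚ`. -/
def DyadicSubgroup : AddSubgroup ℚ where
  carrier := {q | ∃ (a : ℤ) (n : ℕ), q = (a : ℚ) / 2 ^ n}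
  zero_mem' := ⟨0, 0, by norm_num⟩
  add_mem' := by
    rintro p q ⟨a, n, ha⟩ ⟨b, m, hb⟩
    refine ⟨a * 2 ^ m + b * 2 ^ n, n + m, ?_⟩
    rw [ha, hb]; push_cast; rw [pow_add]; field_simp
  neg_mem' := by
    rintro p ⟨a, n, ha⟩
    exact ⟨-a, n, by rw [ha]; push_cast; ring⟩

/-- The copy of `ℤ` inside `ℤ[1/2]`. -/
def ZinDyadic : AddSubgroup DyadicSubgroup :=
  (AddSubgroup.zmultiples (1 : ℚ)).comap DyadicSubgroup.subtype

/-- The Prüfer 2-group `B = ℤ[1/2]/ℤ`. -/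
abbrev Pruefer2 := DyadicSubgroup ⧸ ZinDyadic

/-- The free product `B * B * B` of three copies of the Prüfer 2-group
(written multiplicatively). -/
abbrev FP3Pruefer := Monoid.CoprodI (fun _ : Fin 3 => Multiplicative Pruefer2)

lemma mem_dyadic_iff (q : ℚ) : q ∈ DyadicSubgroup ↔ ∃ (a : ℤ) (n : ℕ), q = (a : ℚ) / 2 ^ n :=
  Iff.rfl

lemma pruefer2_div (n : ℕ) (hn : n ≠ 0) (p : Pruefer2) : ∃ y : Pruefer2, n • y = p := by
  induction p using QuotientAddGroup.induction_on with
  | H x =>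
    obtain ⟨a, k, hx⟩ := (mem_dyadic_iff x.1).mp x.2
    set s : ℕ := n.factorization 2 with hs
    set m : ℕ := n / 2 ^ s with hm
    have hnsm : 2 ^ s * m = n := Nat.ordProj_mul_ordCompl_eq_self n 2
    have hm2 : ¬ (2 ∣ m) := Nat.not_dvd_ordCompl Nat.prime_two hn
    have hcop : IsCoprime (m : ℤ) ((2 : ℤ) ^ (k + s)) := by
      rw [Int.isCoprime_iff_gcd_eq_one]
      have : ((2 : ℤ) ^ (k + s)) = ((2 ^ (k + s) : ℕ) : ℤ) := by push_cast; ring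
      rw [this, Int.gcd_natCast_natCast]
      exact Nat.Coprime.pow_right _ ((Nat.Prime.coprime_iff_not_dvd Nat.prime_two).mpr hm2).symm
    obtain ⟨t, v, htv⟩ := hcop
    -- m * t = 1 - 2^(k+s) * v
    refine ⟨QuotientAddGroup.mk ⟨(t * a : ℤ) / 2 ^ (k + s), t * a, k + s, rfl⟩, ?_⟩
    rw [← QuotientAddGroup.mk_nsmul, QuotientAddGroup.eq_iff_sub_mem]
    show _ ∈ AddSubgroup.comap _ _
    rw [AddSubgroup.mem_comap]
    refine AddSubgroup.mem_zmultiples_iff.mpr ⟨-(2 ^ s * v * a), ?_⟩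
    have hval : ((n • (⟨(t * a : ℤ) / 2 ^ (k + s), t * a, k + s, rfl⟩ : DyadicSubgroup) - x : DyadicSubgroup) : ℚ)
        = n • ((t * a : ℤ) / 2 ^ (k + s) : ℚ) - x.1 := by
      push_cast; ring
    show _ = ((n • (⟨(t * a : ℤ) / 2 ^ (k + s), t * a, k + s, rfl⟩ : DyadicSubgroup) - x : DyadicSubgroup) : ℚ)
    rw [hval, hx]
    have h2 : (2 : ℚ) ^ k ≠ 0 := by positivity
    have h2' : (2 : ℚ) ^ (k + s) ≠ 0 := by positivity
    have hmt : (t : ℚ) * m = 1 - v * 2 ^ (k + s) := by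
      have : (t : ℚ) * m + v * 2 ^ (k+s) = 1 := by exact_mod_cast congrArg (fun z : ℤ => (z : ℚ)) htv
      linarith
    have hnq : (n : ℚ) = 2 ^ s * m := by exact_mod_cast hnsm.symm
    rw [nsmul_eq_mul, hnq]
    rw [zsmul_eq_mul, pow_add]
    push_cast
    field_simp
    linear_combination (-(a : ℚ)) * hmt


lemma hom_pruefer_eq_one {Q : Type*} [Group Q] [Finite Q]
    (f : Multiplicative Pruefer2 →* Q) : f = 1 := by
  refine MonoidHom.ext fun x => ?_
  obtain ⟨y, hy⟩ := pruefer2_div (Nat.card Q) Nat.card_pos.ne' x.toAdd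
  have : x = Multiplicative.ofAdd y ^ Nat.card Q := by
    rw [← ofAdd_nsmul, hy]; rfl
  rw [this, map_pow, pow_card_eq_one']
  rfl

lemma fp3_hom_eq_one {Q : Type*} [Group Q] [Finite Q] (f : FP3Pruefer →* Q) : f = 1 := by
  apply Monoid.CoprodI.ext_hom
  intro i
  exact (hom_pruefer_eq_one _).trans (hom_pruefer_eq_one _).symm

lemma fp3_finiteIndex_eq_top (H : Subgroup FP3Pruefer) (hH : H.FiniteIndex) : H = ⊤ := by
  haveI := hH
  have hN : H.normalCore = ⊤ := by
    have h1 : QuotientGroup.mk' H.normalCore = 1 := fp3_hom_eq_one _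
    have := QuotientGroup.ker_mk' H.normalCore
    rw [h1] at this
    rw [← this, MonoidHom.ker_one]
  exact top_le_iff.mp (hN ▸ H.normalCore_le)

/-- a nontrivial element of the Prüfer 2 group: the class of 1/2 -/
def halfD : DyadicSubgroup := ⟨(1 : ℚ)/2, 1, 1, by norm_num⟩

def halfP : Multiplicative Pruefer2 := Multiplicative.ofAdd (QuotientAddGroup.mk halfD)

lemma halfP_ne_one : halfP ≠ 1 := by
  intro h
  have h0 : (QuotientAddGroup.mk halfD : Pruefer2) = 0 := h
  rw [QuotientAddGroup.eq_zero_iff] at h0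
  have h1 : (1:ℚ)/2 ∈ AddSubgroup.zmultiples (1:ℚ) := h0
  obtain ⟨k, hk⟩ := AddSubgroup.mem_zmultiples_iff.mp h1
  rw [zsmul_eq_mul, mul_one] at hk
  have : (2 : ℚ) * k = 1 := by rw [hk]; norm_num
  have : (2 * k : ℤ) = 1 := by exact_mod_cast this
  omega

lemma fp3_center_eq_one (g : FP3Pruefer) (hg : ∀ y : FP3Pruefer, g * y = y * g) : g = 1 := by
  classical
  by_contra hne
  set M := (fun _ : Fin 3 => Multiplicative Pruefer2) with hM
  set w : Monoid.CoprodI.Word M := Monoid.CoprodI.Word.equiv g with hw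
  have hsymm : ∀ w' : Monoid.CoprodI.Word M, Monoid.CoprodI.Word.equiv.symm w' = w'.prod :=
    fun _ => rfl
  have hprod : w.prod = g := by
    rw [← hsymm]; exact Monoid.CoprodI.Word.equiv.symm_apply_apply g
  have hl : w.toList ≠ [] := by
    intro h0
    apply hne
    rw [← hprod]
    have : w = Monoid.CoprodI.Word.empty := Monoid.CoprodI.Word.ext h0
    rw [this, Monoid.CoprodI.Word.prod_empty]
  obtain ⟨j, hj1, hj2⟩ : ∃ j : Fin 3, j ≠ (w.toList.head hl).1 ∧ j ≠ (w.toList.getLast hl).1 :=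
    (by decide : ∀ a b : Fin 3, ∃ c : Fin 3, c ≠ a ∧ c ≠ b) _ _
  -- build the longer word for the conjugate
  have hchain : (⟨j, halfP⟩ :: (w.toList ++ [⟨j, halfP⁻¹⟩]) :
      List (Σ i : Fin 3, M i)).IsChain (fun l l' => l.1 ≠ l'.1) := by
    rw [List.isChain_cons]
    constructor
    · intro y hy
      rw [List.head?_append_of_ne_nil _ hl, List.head?_eq_head hl] at hy
      rw [Option.mem_some_iff] at hy
      rw [← hy]
      exact hj1
    · rw [List.isChain_append]
      refine ⟨w.chain_ne, List.isChain_singleton _, ?_⟩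
      intro x hx y hy
      rw [List.getLast?_eq_getLast hl, Option.mem_some_iff] at hx
      rw [List.head?_cons, Option.mem_some_iff] at hy
      rw [← hx, ← hy]
      exact fun h => hj2 h.symm
  have hne1 : ∀ l ∈ (⟨j, halfP⟩ :: (w.toList ++ [⟨j, halfP⁻¹⟩]) :
      List (Σ i : Fin 3, M i)), l.2 ≠ 1 := by
    intro l hlmem
    rcases List.mem_cons.mp hlmem with h | h
    · rw [h]; exact halfP_ne_one
    · rcases List.mem_append.mp h with h' | h'
      · exact w.ne_one l h'
      · rw [List.mem_singleton.mp h']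
        exact inv_ne_one.mpr halfP_ne_one
  set w2 : Monoid.CoprodI.Word M :=
    ⟨⟨j, halfP⟩ :: (w.toList ++ [⟨j, halfP⁻¹⟩]), hne1, hchain⟩ with hw2
  have hprod2 : w2.prod = Monoid.CoprodI.of (M := M) (i := j) halfP * g *
      (Monoid.CoprodI.of (M := M) (i := j) halfP)⁻¹ := by
    show (List.map (fun l : Σ i : Fin 3, M i => Monoid.CoprodI.of l.snd)
        (⟨j, halfP⟩ :: (w.toList ++ [⟨j, halfP⁻¹⟩]))).prod = _
    rw [List.map_cons, List.map_append, List.map_singleton, List.prod_cons,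
      List.prod_append, List.prod_singleton]
    have hwp : (List.map (fun l : Σ i : Fin 3, M i => Monoid.CoprodI.of l.snd) w.toList).prod
        = g := hprod
    rw [hwp, ← mul_assoc, map_inv]
  have hgc : Monoid.CoprodI.of (M := M) (i := j) halfP * g *
      (Monoid.CoprodI.of (M := M) (i := j) halfP)⁻¹ = g := by
    rw [← hg]; exact mul_inv_cancel_right g _
  have hw2w : w2 = w := by
    apply Monoid.CoprodI.Word.equiv.symm.injective
    rw [hsymm, hsymm, hprod2, hprod, hgc]
  have hlen := congrArg (fun u : Monoid.CoprodI.Word M => u.toList.length) hw2w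
  simp only [hw2, List.length_cons, List.length_append, List.length_singleton] at hlen
  omega


/-- Let `Γ` be a group with an infinite cyclic central subgroup `Z ≅ ℤ` (the image of
`z`) such that `Γ/Z ≅ B * B * B` where `B` is the Prüfer 2-group, and such that the
extension `1 → ℤ → Γ → B*B*B → 1` does not split over the first factor (no lift `s` of
the inclusion of the first factor exists).  Then `Γ` has no finite index subgroup `Γ₀`
that splits as a direct product `Γ₀ ≅ ℤ × Γ'`. -/
theorem stmt14 {Γ : Type} [Group Γ]
    (z : Multiplicative ℤ →* Γ) (hz : Function.Injective z)
    (hzc : z.range ≤ Subgroup.center Γ)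
    (q : Γ →* FP3Pruefer) (hq : Function.Surjective q) (hker : q.ker = z.range)
    (hnonsplit : ¬ ∃ s : Multiplicative Pruefer2 →* Γ,
      q.comp s =
        Monoid.CoprodI.of (M := fun _ : Fin 3 => Multiplicative Pruefer2) (i := (0 : Fin 3))) :
    ¬ ∃ (Γ₀ : Subgroup Γ) (Γ' : Type) (_ : Group Γ'),
        Γ₀.FiniteIndex ∧ Nonempty (Γ₀ ≃* Multiplicative ℤ × Γ') := by
  rintro ⟨Γ₀, Γ', hGrp, hfin, ⟨e⟩⟩
  haveI := hfin
  -- the image of Γ₀ is everything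
  have hmapfin : (Subgroup.map (N := FP3Pruefer) q Γ₀).FiniteIndex := by
    constructor
    have hdvd := Γ₀.index_map_dvd (G' := FP3Pruefer) (f := q) hq
    intro h0
    rw [h0] at hdvd
    exact hfin.index_ne_zero (zero_dvd_iff.mp hdvd)
  have hmap : Γ₀.map q = ⊤ := fp3_finiteIndex_eq_top _ hmapfin
  have hsurj : ∀ y : FP3Pruefer, ∃ x : Γ₀, q x = y := by
    intro y
    have hy : y ∈ Γ₀.map q := hmap ▸ Subgroup.mem_top y
    obtain ⟨x, hx, hqx⟩ := hy
    exact ⟨⟨x, hx⟩, hqx⟩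
  -- the central element w
  set w : Γ₀ := e.symm (Multiplicative.ofAdd (1:ℤ), 1) with hwdef
  have hwc : ∀ x : Γ₀, w * x = x * w := by
    intro x
    apply e.injective
    rw [map_mul, map_mul, hwdef, MulEquiv.apply_symm_apply]
    exact Prod.ext (mul_comm _ _) ((one_mul _).trans (mul_one _).symm)
  have hqw : q (w : Γ) = 1 := by
    apply fp3_center_eq_one
    intro y
    obtain ⟨x, hx⟩ := hsurj y
    rw [← hx, ← map_mul, ← map_mul]
    exact congrArg q (congrArg Subtype.val (hwc x))
  obtain ⟨β, hβ⟩ : (w : Γ) ∈ z.range := by rw [← hker]; exact hqw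
  -- the complement map
  set φ : Γ' →* Γ :=
    Γ₀.subtype.comp (e.symm.toMonoidHom.comp (MonoidHom.inr (Multiplicative ℤ) Γ')) with hφ
  set ψ : Γ' →* FP3Pruefer := q.comp φ with hψ
  have hφval : ∀ g' : Γ', φ g' = ((e.symm (1, g') : Γ₀) : Γ) := fun _ => rfl
  have hinj : Function.Injective ψ := by
    rw [injective_iff_map_eq_one]
    intro g' hg'
    obtain ⟨α, hα⟩ : φ g' ∈ z.range := by rw [← hker]; exact hg'
    have hexp : α ^ (Multiplicative.toAdd β) = β ^ (Multiplicative.toAdd α) := by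
      apply Multiplicative.toAdd.injective
      rw [toAdd_zpow, toAdd_zpow, smul_eq_mul, smul_eq_mul, mul_comm]
    have hcomm : (e.symm ((1 : Multiplicative ℤ), g')) ^ (Multiplicative.toAdd β)
        = w ^ (Multiplicative.toAdd α) := by
      apply Subtype.ext
      rw [SubgroupClass.coe_zpow, SubgroupClass.coe_zpow]
      rw [← hφval, ← hα, ← hβ, ← map_zpow, ← map_zpow, hexp]
    have h2 := congrArg e hcomm
    rw [map_zpow, map_zpow, hwdef, MulEquiv.apply_symm_apply, MulEquiv.apply_symm_apply] at h2
    have h3 : (1 : Multiplicative ℤ) ^ (Multiplicative.toAdd β)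
        = (Multiplicative.ofAdd (1:ℤ)) ^ (Multiplicative.toAdd α) := congrArg Prod.fst h2
    rw [one_zpow] at h3
    have hα0 : Multiplicative.toAdd α = 0 := by
      have := congrArg Multiplicative.toAdd h3
      simpa [toAdd_zpow] using this.symm
    have hα1 : α = 1 := by
      have : α = Multiplicative.ofAdd (Multiplicative.toAdd α) := rfl
      rw [this, hα0]; rfl
    have hφ1 : φ g' = 1 := by rw [← hα, hα1, map_one]
    have : e.symm ((1 : Multiplicative ℤ), g') = (1 : Γ₀) := by
      apply Subtype.ext
      rw [← hφval, hφ1]; rfl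
    have h4 := congrArg e this
    rw [MulEquiv.apply_symm_apply, map_one] at h4
    exact congrArg Prod.snd h4
  have hsur : Function.Surjective ψ := by
    intro y
    obtain ⟨x, hx⟩ := hsurj y
    refine ⟨(e x).2, ?_⟩
    have hx2 : x = e.symm ((e x).1, 1) * e.symm (1, (e x).2) := by
      rw [← map_mul]
      have hp : (((e x).1, (1:Γ')) : Multiplicative ℤ × Γ') * ((1 : Multiplicative ℤ), (e x).2)
          = e x := Prod.ext (mul_one _) (one_mul _)
      rw [hp, MulEquiv.symm_apply_apply]
    have hfst : e.symm ((e x).1, (1:Γ')) = w ^ (Multiplicative.toAdd (e x).1) := by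
      rw [hwdef, ← map_zpow]
      congr 1
      refine Prod.ext ?_ ?_
      · show (e x).1 = (Multiplicative.ofAdd (1:ℤ)) ^ (Multiplicative.toAdd (e x).1)
        apply Multiplicative.toAdd.injective
        rw [toAdd_zpow]
        simp
      · show (1 : Γ') = (1 : Γ') ^ (Multiplicative.toAdd (e x).1)
        rw [one_zpow]
    have hval : (x : Γ) = ((w : Γ)) ^ (Multiplicative.toAdd (e x).1) * φ (e x).2 := by
      rw [hφval]
      have := congrArg Subtype.val hx2
      rw [hfst] at this
      rw [this]
      rfl
    rw [← hx, hval, map_mul, map_zpow, hqw, one_zpow, one_mul]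
    rfl
  set eqv : Γ' ≃* FP3Pruefer := MulEquiv.ofBijective ψ ⟨hinj, hsur⟩ with heqv
  have hqφ : ∀ u : FP3Pruefer, q (φ (eqv.symm u)) = u := by
    intro u
    have h1 : ψ (eqv.symm u) = u := eqv.apply_symm_apply u
    exact h1
  refine hnonsplit ⟨(φ.comp eqv.symm.toMonoidHom).comp
    (Monoid.CoprodI.of (M := fun _ : Fin 3 => Multiplicative Pruefer2) (i := (0 : Fin 3))), ?_⟩
  ext x
  exact hqφ _
end

section
/- Let X be a proper CAT(0) space and H ≤ Isom(X) a subgroup. If H' ≤ Isom(X) is a subgroup commensurable with H (i.e. H ∩ H' has finite index in both H and H'), and Y, Y' are the closed convex hulls of an H-orbit and an H'-orbit respectively, then the visual boundaries ∂Y and ∂Y' of Y and Y' coincide as subsets of the visual boundary ∂X. In particular, the 'convex limit set' ΔH := ∂Y is well-defined and invariant under commensuration. -/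
open scoped NNReal

/-- A set is midpoint-convex (which, for closed sets in complete CAT(0) spaces, is
equivalent to convexity). -/
def MidptConvex {X : Type*} [MetricSpace X] (S : Set X) : Prop :=
  ∀ x ∈ S, ∀ y ∈ S, ∀ m : X, dist x m = dist x y / 2 → dist y m = dist x y / 2 → m ∈ S

/-- A geodesic metric space: any two points admit a midpoint (for complete spaces this is
equivalent to being geodesic). -/
def HasMidpoints (X : Type*) [MetricSpace X] : Prop :=
  ∀ x y : X, ∃ m : X, dist x m = dist x y / 2 ∧ dist y m = dist x y / 2

/-- The CAT(0) comparison inequality (the CN inequality of Bruhat–Tits). -/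
def IsCAT0 (X : Type*) [MetricSpace X] : Prop :=
  ∀ x y z m : X, dist y m = dist y z / 2 → dist z m = dist y z / 2 →
    dist x m ^ 2 ≤ (dist x y ^ 2 + dist x z ^ 2) / 2 - dist y z ^ 2 / 4

/-- The closed convex hull of a set: the intersection of all closed midpoint-convex sets
containing it. -/
def metricClosedConvexHull {X : Type*} [MetricSpace X] (S : Set X) : Set X :=
  ⋂₀ {C : Set X | IsClosed C ∧ MidptConvex C ∧ S ⊆ C}

/-- A geodesic ray in `X`, parametrized by `ℝ≥0`. -/
def IsGeodesicRay {X : Type*} [MetricSpace X] (c : ℝ≥0 → X) : Prop :=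
  ∀ s t : ℝ≥0, dist (c s) (c t) = |(s : ℝ) - (t : ℝ)|

/-- Two rays are asymptotic when they stay at bounded distance; asymptoty classes of rays
are the points of the visual boundary `∂X`. -/
def AsymptoticRays {X : Type*} [MetricSpace X] (c c' : ℝ≥0 → X) : Prop :=
  ∃ M : ℝ, ∀ t : ℝ≥0, dist (c t) (c' t) ≤ M

open Filter Set Topology

section AuxStmt16

noncomputable def segFn {X : Type*} (m : X → X → X) (p q : X) : ℕ → ℕ → X
  | 0, k => if k = 0 then p else q
  | (n+1), k =>
    if k % 2 = 0 then segFn m p q n (k / 2)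
    else m (segFn m p q n (k / 2)) (segFn m p q n (k / 2 + 1))

variable {X : Type*} [MetricSpace X]

lemma cat0_commonStart (hcat : IsCAT0 X) {a b q u v : X}
    (hu1 : dist a u = dist a b / 2) (hu2 : dist b u = dist a b / 2)
    (hv1 : dist a v = dist a q / 2) (hv2 : dist q v = dist a q / 2) :
    dist u v ≤ dist b q / 2 := by
  have CN1 := hcat u a q v hv1 hv2
  have CN2 := hcat q a b u hu1 hu2
  have h1 : dist u a = dist a b / 2 := by rw [dist_comm]; exact hu1
  have h2 : dist u q = dist q u := dist_comm _ _
  have h3 : dist q a = dist a q := dist_comm _ _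
  have h4 : dist q b = dist b q := dist_comm _ _
  have hbq : (0:ℝ) ≤ dist b q := dist_nonneg
  have huv : (0:ℝ) ≤ dist u v := dist_nonneg
  rw [h1, h2] at CN1
  rw [h3, h4] at CN2
  have key : dist u v ^ 2 ≤ (dist b q / 2) ^ 2 := by nlinarith [CN1, CN2]
  nlinarith [key, huv, hbq]

lemma cat0_jointMid (hgeo : HasMidpoints X) (hcat : IsCAT0 X) {a b p q m₁ m₂ : X}
    (h1a : dist a m₁ = dist a b / 2) (h1b : dist b m₁ = dist a b / 2)
    (h2p : dist p m₂ = dist p q / 2) (h2q : dist q m₂ = dist p q / 2) :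
    dist m₁ m₂ ≤ (dist a p + dist b q) / 2 := by
  obtain ⟨w, hw1, hw2⟩ := hgeo a q
  have s1 : dist m₁ w ≤ dist b q / 2 := cat0_commonStart hcat h1a h1b hw1 hw2
  have hw1' : dist q w = dist q a / 2 := by rw [dist_comm q a]; exact hw2
  have hw2' : dist a w = dist q a / 2 := by rw [dist_comm q a]; exact hw1
  have h2p' : dist p m₂ = dist q p / 2 := by rw [dist_comm q p]; exact h2p
  have h2q' : dist q m₂ = dist q p / 2 := by rw [dist_comm q p]; exact h2q
  have s2 : dist w m₂ ≤ dist a p / 2 := cat0_commonStart hcat hw1' hw2' h2q' h2p'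
  calc dist m₁ m₂ ≤ dist m₁ w + dist w m₂ := dist_triangle _ _ _
    _ ≤ (dist a p + dist b q) / 2 := by linarith

section seg
variable (m : X → X → X) (p q : X)
  (hm1 : ∀ x y, dist x (m x y) = dist x y / 2)
  (hm2 : ∀ x y, dist y (m x y) = dist x y / 2)

omit [MetricSpace X] in
lemma segFn_zero : ∀ n, segFn m p q n 0 = p := by
  intro n; induction n with
  | zero => simp [segFn]
  | succ n ih => simp [segFn, ih]

omit [MetricSpace X] in
lemma segFn_top : ∀ n, segFn m p q n (2 ^ n) = q := by
  intro n; induction n with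
  | zero => simp [segFn]
  | succ n ih =>
    have h1 : 2 ^ (n+1) % 2 = 0 := by omega
    have h2 : 2 ^ (n+1) / 2 = 2 ^ n := by omega
    simp [segFn, h1, h2, ih]

omit [MetricSpace X] in
lemma segFn_double (n k : ℕ) : segFn m p q (n+1) (2*k) = segFn m p q n k := by
  have h1 : 2 * k % 2 = 0 := by omega
  have h2 : 2 * k / 2 = k := by omega
  simp [segFn, h1, h2]

include hm1 hm2 in
lemma segFn_consec : ∀ n, ∀ k < 2 ^ n,
    dist (segFn m p q n k) (segFn m p q n (k+1)) = dist p q / 2 ^ n := by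
  intro n; induction n with
  | zero => intro k hk; interval_cases k; simp [segFn]
  | succ n ih =>
    intro k hk
    rcases Nat.even_or_odd k with ⟨j, hj⟩ | ⟨j, hj⟩
    · subst hj
      have h1 : (j + j) % 2 = 0 := by omega
      have h2 : (j + j) / 2 = j := by omega
      have h3 : (j + j + 1) % 2 = 1 := by omega
      have h4 : (j + j + 1) / 2 = j := by omega
      have hj2 : j < 2 ^ n := by have := Nat.pow_succ 2 n ▸ hk; omega
      simp only [segFn, h1, h2, h3, h4, if_true, if_false, one_ne_zero]
      rw [hm1, ih j hj2]
      ring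
    · subst hj
      have h1 : (2*j + 1) % 2 = 1 := by omega
      have h2 : (2*j + 1) / 2 = j := by omega
      have h3 : (2*j + 1 + 1) % 2 = 0 := by omega
      have h4 : (2*j + 1 + 1) / 2 = j + 1 := by omega
      have hj2 : j < 2 ^ n := by have := Nat.pow_succ 2 n ▸ hk; omega
      simp only [segFn, h1, h2, h3, h4, if_true, if_false, one_ne_zero]
      rw [dist_comm, hm2, ih j hj2]
      ring

include hm1 hm2 in
lemma segFn_chain (n : ℕ) : ∀ i j, i ≤ j → j ≤ 2 ^ n →
    dist (segFn m p q n i) (segFn m p q n j) ≤ ((j : ℝ) - i) * (dist p q / 2 ^ n) := by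
  intro i j hij hj
  induction j with
  | zero => simp [Nat.le_zero.mp hij]
  | succ j ihj =>
    rcases Nat.lt_or_ge i (j+1) with h | h
    · have hij' : i ≤ j := by omega
      have hj' : j ≤ 2 ^ n := by omega
      calc dist (segFn m p q n i) (segFn m p q n (j+1))
          ≤ dist (segFn m p q n i) (segFn m p q n j)
            + dist (segFn m p q n j) (segFn m p q n (j+1)) := dist_triangle _ _ _
        _ ≤ ((j:ℝ) - i) * (dist p q / 2 ^ n) + dist p q / 2 ^ n := by
            have := segFn_consec m p q hm1 hm2 n j (by omega)
            have := ihj hij' hj'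
            linarith
        _ = (((j+1:ℕ):ℝ) - i) * (dist p q / 2 ^ n) := by push_cast; ring
    · have : i = j + 1 := by omega
      subst this
      simp

include hm1 hm2 in
lemma segFn_dist (n : ℕ) : ∀ i j, i ≤ j → j ≤ 2 ^ n →
    dist (segFn m p q n i) (segFn m p q n j) = ((j : ℝ) - i) * (dist p q / 2 ^ n) := by
  intro i j hij hj
  have hpow : (0:ℝ) < 2 ^ n := by positivity
  have h1 := segFn_chain m p q hm1 hm2 n i j hij hj
  have h2 := segFn_chain m p q hm1 hm2 n 0 i (by omega) (by omega)
  have h3 := segFn_chain m p q hm1 hm2 n j (2^n) hj (le_refl _)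
  rw [segFn_zero] at h2
  rw [segFn_top] at h3
  have htot : dist p q ≤ dist (segFn m p q n i) (segFn m p q n j)
      + (((i:ℝ) - 0) * (dist p q / 2 ^ n) + (((2^n:ℕ):ℝ) - j) * (dist p q / 2 ^ n)) := by
    calc dist p q ≤ dist p (segFn m p q n i) + dist (segFn m p q n i) q := dist_triangle _ _ _
      _ ≤ dist p (segFn m p q n i) + (dist (segFn m p q n i) (segFn m p q n j)
          + dist (segFn m p q n j) q) := by linarith [dist_triangle (segFn m p q n i) (segFn m p q n j) q]
      _ ≤ _ := by rw [dist_comm p (segFn m p q n i)] at h2 ⊢; push_cast at h2 h3 ⊢; linarith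
  have hcast : ((2^n:ℕ):ℝ) = (2:ℝ)^n := by push_cast; ring
  rw [hcast] at htot
  have : ((j:ℝ) - i) * (dist p q / 2 ^ n) ≤ dist (segFn m p q n i) (segFn m p q n j) := by
    have hD : dist p q = (2:ℝ)^n * (dist p q / 2^n) := by field_simp
    nlinarith [htot]
  linarith

include hm1 hm2 in
lemma segFn_mem (C : Set X) (hC : MidptConvex C) (hp : p ∈ C) (hq : q ∈ C) :
    ∀ n k, k ≤ 2 ^ n → segFn m p q n k ∈ C := by
  intro n
  induction n with
  | zero => intro k hk; interval_cases k <;> simp [segFn, hp, hq]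
  | succ n ih =>
    intro k hk
    rcases Nat.even_or_odd k with ⟨j, hj⟩ | ⟨j, hj⟩
    · subst hj
      have h1 : (j + j) % 2 = 0 := by omega
      have h2 : (j + j) / 2 = j := by omega
      simp only [segFn, h1, h2, if_true]
      exact ih j (by rw [pow_succ] at hk; omega)
    · subst hj
      have h1 : (2*j + 1) % 2 = 1 := by omega
      have h2 : (2*j + 1) / 2 = j := by omega
      simp only [segFn, h1, h2, if_false, one_ne_zero]
      have hjm : j < 2 ^ n := by rw [pow_succ] at hk; omega
      exact hC _ (ih j (by omega)) _ (ih (j+1) (by omega)) _ (hm1 _ _) (hm2 _ _)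
end seg

lemma dyadic_tendsto {t : ℝ} (ht : 0 ≤ t) :
    Tendsto (fun n : ℕ => (⌊t * 2 ^ n⌋₊ : ℝ) / 2 ^ n) atTop (𝓝 t) := by
  have h1 : ∀ n : ℕ, t - (1/2) ^ n ≤ (⌊t * 2 ^ n⌋₊ : ℝ) / 2 ^ n := by
    intro n
    have hpow : (0:ℝ) < 2 ^ n := by positivity
    have := Nat.lt_floor_add_one (t * 2 ^ n)
    rw [sub_le_iff_le_add, div_add' _ _ _ (ne_of_gt hpow), le_div_iff₀ hpow]
    have h2 : (1/2:ℝ)^n * 2^n = 1 := by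
      rw [one_div, inv_pow, inv_mul_cancel₀ (by positivity)]
    nlinarith [this]
  have h2 : ∀ n : ℕ, (⌊t * 2 ^ n⌋₊ : ℝ) / 2 ^ n ≤ t := by
    intro n
    have hpow : (0:ℝ) < 2 ^ n := by positivity
    rw [div_le_iff₀ hpow]
    exact Nat.floor_le (by positivity)
  have hlim : Tendsto (fun n : ℕ => t - (1/2:ℝ) ^ n) atTop (𝓝 t) := by
    have := tendsto_pow_atTop_nhds_zero_of_lt_one (by norm_num : (0:ℝ) ≤ 1/2)
      (by norm_num : (1/2:ℝ) < 1)
    simpa using tendsto_const_nhds.sub this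
  exact tendsto_of_tendsto_of_tendsto_of_le_of_le hlim tendsto_const_nhds h1 h2

lemma geo_exists [CompleteSpace X] (hgeo : HasMidpoints X) (p q : X) :
    ∃ γ : ℝ → X, γ 0 = p ∧ γ 1 = q ∧
      (∀ s ∈ Icc (0:ℝ) 1, ∀ t ∈ Icc (0:ℝ) 1, dist (γ s) (γ t) = |s - t| * dist p q) ∧
      (∀ C : Set X, IsClosed C → MidptConvex C → p ∈ C → q ∈ C →
        ∀ t ∈ Icc (0:ℝ) 1, γ t ∈ C) := by
  classical
  obtain ⟨m, hm1, hm2⟩ : ∃ m : X → X → X, (∀ x y, dist x (m x y) = dist x y / 2) ∧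
      (∀ x y, dist y (m x y) = dist x y / 2) := by
    refine ⟨fun a b => (hgeo a b).choose, fun x y => (hgeo x y).choose_spec.1,
      fun x y => (hgeo x y).choose_spec.2⟩
  set D := dist p q with hDdef
  have hD0 : 0 ≤ D := dist_nonneg
  set τ : ℝ → ℝ := fun t => min (max t 0) 1 with hτ
  have hτ_mem : ∀ t, τ t ∈ Icc (0:ℝ) 1 := fun t =>
    ⟨le_min (le_max_right _ _) zero_le_one, min_le_right _ _⟩
  have hτ_id : ∀ t ∈ Icc (0:ℝ) 1, τ t = t := by
    intro t ht
    simp only [hτ]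
    rw [max_eq_left ht.1, min_eq_left ht.2]
  set kk : ℝ → ℕ → ℕ := fun t n => ⌊τ t * 2 ^ n⌋₊ with hkk
  have hkk_le : ∀ t n, kk t n ≤ 2 ^ n := by
    intro t n
    apply Nat.floor_le_of_le
    have h1 := (hτ_mem t).2
    have hp : (0:ℝ) ≤ 2^n := by positivity
    calc τ t * 2^n ≤ 1 * 2^n := by nlinarith
      _ = ((2^n : ℕ) : ℝ) := by push_cast; ring
  set a : ℝ → ℕ → X := fun t n => segFn m p q n (kk t n) with ha
  have hcauchy : ∀ t, CauchySeq (a t) := by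
    intro t
    apply cauchySeq_of_le_geometric (1/2) D (by norm_num)
    intro n
    have hτ0 : 0 ≤ τ t := (hτ_mem t).1
    have hlow : 2 * kk t n ≤ kk t (n+1) := by
      apply Nat.le_floor
      push_cast
      have hfl := Nat.floor_le (by positivity : (0:ℝ) ≤ τ t * 2^n)
      calc (2:ℝ) * ⌊τ t * 2^n⌋₊ ≤ 2 * (τ t * 2^n) := by nlinarith
        _ = τ t * 2^(n+1) := by ring
    have hhigh : kk t (n+1) ≤ 2 * kk t n + 1 := by
      have : kk t (n+1) < 2 * kk t n + 2 := by
        rw [hkk, Nat.floor_lt (by positivity)]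
        have h := Nat.lt_floor_add_one (τ t * 2^n)
        have hp : τ t * 2^(n+1) = 2*(τ t * 2^n) := by ring
        push_cast
        linarith
      omega
    have h1 : segFn m p q n (kk t n) = segFn m p q (n+1) (2 * kk t n) :=
      (segFn_double m p q n _).symm
    rw [ha]
    simp only
    rw [h1]
    calc dist (segFn m p q (n+1) (2 * kk t n)) (segFn m p q (n+1) (kk t (n+1)))
        ≤ ((kk t (n+1) : ℝ) - (2 * kk t n : ℕ)) * (D / 2 ^ (n+1)) :=
          segFn_chain m p q hm1 hm2 (n+1) _ _ hlow (hkk_le t (n+1))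
      _ ≤ D * (1/2) ^ n := by
          have hpow : (0:ℝ) < 2^(n+1) := by positivity
          have hc : ((kk t (n+1) : ℝ) - ((2 * kk t n : ℕ) : ℝ)) ≤ 1 := by
            have h := hhigh
            have : (kk t (n+1) : ℝ) ≤ 2 * (kk t n : ℝ) + 1 := by exact_mod_cast h
            push_cast
            linarith
          have hc0 : (0:ℝ) ≤ ((kk t (n+1) : ℝ) - ((2 * kk t n : ℕ) : ℝ)) := by
            have : ((2 * kk t n : ℕ) : ℝ) ≤ (kk t (n+1) : ℝ) := by exact_mod_cast hlow
            linarith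
          have hD2 : (0:ℝ) ≤ D / 2^(n+1) := by positivity
          have heq : D / 2^(n+1) ≤ D * (1/2)^n := by
            rw [div_le_iff₀ hpow]
            have : (1/2:ℝ)^n * 2^(n+1) = 2 := by
              rw [one_div, inv_pow]
              field_simp
              ring
            nlinarith [pow_nonneg (by norm_num : (0:ℝ) ≤ 1/2) n, hD0]
          calc ((kk t (n+1) : ℝ) - ((2 * kk t n : ℕ) : ℝ)) * (D / 2 ^ (n+1))
              ≤ 1 * (D / 2^(n+1)) := mul_le_mul_of_nonneg_right hc hD2
            _ = D / 2^(n+1) := one_mul _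
            _ ≤ D * (1/2)^n := heq
  have hconv : ∀ t, ∃ y : X, Tendsto (a t) atTop (𝓝 y) :=
    fun t => cauchySeq_tendsto_of_complete (hcauchy t)
  set γ : ℝ → X := fun t => (hconv t).choose with hγdef
  have hγ : ∀ t, Tendsto (a t) atTop (𝓝 (γ t)) := fun t => (hconv t).choose_spec
  have hkk_div : ∀ t ∈ Icc (0:ℝ) 1, Tendsto (fun n => (kk t n : ℝ) / 2 ^ n) atTop (𝓝 t) := by
    intro t ht
    have := dyadic_tendsto (t := t) ht.1
    simpa [hkk, hτ_id t ht] using this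
  have key : ∀ s ∈ Icc (0:ℝ) 1, ∀ t ∈ Icc (0:ℝ) 1, s ≤ t →
      dist (γ s) (γ t) = (t - s) * D := by
    intro s hs t ht hst
    have hmono : ∀ n, kk s n ≤ kk t n := by
      intro n
      apply Nat.floor_le_floor
      have h1 : τ s ≤ τ t := by rw [hτ_id s hs, hτ_id t ht]; exact hst
      have : (0:ℝ) ≤ 2^n := by positivity
      nlinarith
    have hdist : ∀ n, dist (a s n) (a t n) = ((kk t n : ℝ) - kk s n) * (D / 2 ^ n) := by
      intro n
      exact segFn_dist m p q hm1 hm2 n _ _ (hmono n) (hkk_le t n)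
    have h1 : Tendsto (fun n => dist (a s n) (a t n)) atTop (𝓝 (dist (γ s) (γ t))) :=
      (hγ s).dist (hγ t)
    have h2 : Tendsto (fun n => dist (a s n) (a t n)) atTop (𝓝 ((t - s) * D)) := by
      have heq : ∀ n, dist (a s n) (a t n) = (kk t n : ℝ)/2^n * D - (kk s n : ℝ)/2^n * D := by
        intro n; rw [hdist n]; field_simp
      rw [show (fun n => dist (a s n) (a t n))
          = fun n => (kk t n : ℝ)/2^n * D - (kk s n : ℝ)/2^n * D from funext heq]
      have hh : Tendsto (fun n => (kk t n : ℝ)/2^n * D - (kk s n : ℝ)/2^n * D) atTop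
          (𝓝 (t * D - s * D)) :=
        ((hkk_div t ht).mul (tendsto_const_nhds (x := D))).sub
          ((hkk_div s hs).mul (tendsto_const_nhds (x := D)))
      have : t * D - s * D = (t - s) * D := by ring
      rw [this] at hh
      exact hh
    exact tendsto_nhds_unique h1 h2
  have hends : γ 0 = p ∧ γ 1 = q := by
    constructor
    · have h0 : ∀ n, a 0 n = p := by
        intro n
        have : kk 0 n = 0 := by
          simp [hkk, hτ]
        rw [ha]; simp only [this]
        exact segFn_zero m p q n
      exact tendsto_nhds_unique (hγ 0)
        (by rw [show a 0 = fun _ => p from funext h0]; try exact tendsto_const_nhds)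
    · have h0 : ∀ n, a 1 n = q := by
        intro n
        have hτ1 : τ 1 = 1 := hτ_id 1 ⟨zero_le_one, le_refl _⟩
        have : kk 1 n = 2 ^ n := by
          simp only [hkk, hτ1, one_mul]
          rw [show (2:ℝ)^n = ((2^n : ℕ) : ℝ) by push_cast; ring]
          exact Nat.floor_natCast _
        rw [ha]; simp only [this]
        exact segFn_top m p q n
      exact tendsto_nhds_unique (hγ 1)
        (by rw [show a 1 = fun _ => q from funext h0]; try exact tendsto_const_nhds)
  refine ⟨γ, hends.1, hends.2, ?_, ?_⟩
  · intro s hs t ht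
    rcases le_total s t with h | h
    · rw [key s hs t ht h, abs_of_nonpos (by linarith)]; try ring
    · rw [dist_comm, key t ht s hs h, abs_of_nonneg (by linarith)]; try ring
  · intro C hCcl hCcv hp hq t ht
    apply hCcl.mem_of_tendsto (hγ t)
    filter_upwards with n
    exact segFn_mem m p q hm1 hm2 C hCcv hp hq n (kk t n) (hkk_le t n)

/-- Convexity of the distance between two constant-speed geodesics. -/
lemma geodesic_convexity (hgeo : HasMidpoints X) (hcat : IsCAT0 X)
    {γ σ : ℝ → X} {L L' : ℝ}
    (hγ : ∀ s ∈ Icc (0:ℝ) 1, ∀ t ∈ Icc (0:ℝ) 1, dist (γ s) (γ t) = |s - t| * L)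
    (hσ : ∀ s ∈ Icc (0:ℝ) 1, ∀ t ∈ Icc (0:ℝ) 1, dist (σ s) (σ t) = |s - t| * L') :
    ∀ t ∈ Icc (0:ℝ) 1, dist (γ t) (σ t)
      ≤ (1 - t) * dist (γ 0) (σ 0) + t * dist (γ 1) (σ 1) := by
  have hL0 : 0 ≤ L := by
    have := hγ 0 ⟨le_refl _, zero_le_one⟩ 1 ⟨zero_le_one, le_refl _⟩
    simp at this
    nlinarith [dist_nonneg (x := γ 0) (y := γ 1)]
  have hL'0 : 0 ≤ L' := by
    have := hσ 0 ⟨le_refl _, zero_le_one⟩ 1 ⟨zero_le_one, le_refl _⟩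
    simp at this
    nlinarith [dist_nonneg (x := σ 0) (y := σ 1)]
  set F : ℝ → ℝ := fun t => dist (γ t) (σ t) with hF
  -- midpoint witnesses on geodesics
  have hmidγ : ∀ s ∈ Icc (0:ℝ) 1, ∀ t ∈ Icc (0:ℝ) 1,
      dist (γ s) (γ ((s+t)/2)) = dist (γ s) (γ t) / 2 ∧
      dist (γ t) (γ ((s+t)/2)) = dist (γ s) (γ t) / 2 := by
    intro s hs t ht
    have hmem : (s+t)/2 ∈ Icc (0:ℝ) 1 := ⟨by linarith [hs.1, ht.1], by linarith [hs.2, ht.2]⟩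
    constructor
    · rw [hγ s hs _ hmem, hγ s hs t ht]
      rw [show s - (s+t)/2 = (s-t)/2 by ring, abs_div]
      simp only [abs_two]
      ring
    · rw [hγ t ht _ hmem, hγ s hs t ht]
      rw [show t - (s+t)/2 = -((s-t)/2) by ring, abs_neg, abs_div]
      simp only [abs_two]
      ring
  have hmidσ : ∀ s ∈ Icc (0:ℝ) 1, ∀ t ∈ Icc (0:ℝ) 1,
      dist (σ s) (σ ((s+t)/2)) = dist (σ s) (σ t) / 2 ∧
      dist (σ t) (σ ((s+t)/2)) = dist (σ s) (σ t) / 2 := by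
    intro s hs t ht
    have hmem : (s+t)/2 ∈ Icc (0:ℝ) 1 := ⟨by linarith [hs.1, ht.1], by linarith [hs.2, ht.2]⟩
    constructor
    · rw [hσ s hs _ hmem, hσ s hs t ht]
      rw [show s - (s+t)/2 = (s-t)/2 by ring, abs_div]
      simp only [abs_two]
      ring
    · rw [hσ t ht _ hmem, hσ s hs t ht]
      rw [show t - (s+t)/2 = -((s-t)/2) by ring, abs_neg, abs_div]
      simp only [abs_two]
      ring
  have hmidF : ∀ s ∈ Icc (0:ℝ) 1, ∀ t ∈ Icc (0:ℝ) 1,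
      F ((s+t)/2) ≤ (F s + F t) / 2 := by
    intro s hs t ht
    obtain ⟨hg1, hg2⟩ := hmidγ s hs t ht
    obtain ⟨hq1, hq2⟩ := hmidσ s hs t ht
    have := cat0_jointMid hgeo hcat hg1 hg2 hq1 hq2
    simpa [hF] using this
  -- dyadic convexity
  have hdy : ∀ n : ℕ, ∀ k : ℕ, k ≤ 2 ^ n →
      F ((k : ℝ) / 2 ^ n) ≤ (1 - (k:ℝ)/2^n) * F 0 + ((k:ℝ)/2^n) * F 1 := by
    intro n
    induction n with
    | zero =>
      intro k hk
      interval_cases k <;> simp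
    | succ n ih =>
      intro k hk
      rcases Nat.even_or_odd k with ⟨j, hj⟩ | ⟨j, hj⟩
      · subst hj
        have hj2 : j ≤ 2 ^ n := by rw [pow_succ] at hk; omega
        have hcast : ((j + j : ℕ) : ℝ) / 2 ^ (n+1) = (j : ℝ) / 2 ^ n := by
          push_cast
          rw [div_eq_div_iff (by positivity) (by positivity)]
          ring
        rw [hcast]
        exact ih j hj2
      · subst hj
        have hj2 : j < 2 ^ n := by rw [pow_succ] at hk; omega
        have hs₁ : (j:ℝ)/2^n ∈ Icc (0:ℝ) 1 := by
          constructor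
          · positivity
          · rw [div_le_one (by positivity)]
            exact_mod_cast Nat.le_of_lt hj2
        have hs₂ : ((j+1:ℕ):ℝ)/2^n ∈ Icc (0:ℝ) 1 := by
          constructor
          · positivity
          · rw [div_le_one (by positivity)]
            exact_mod_cast hj2
        have hcast : ((2*j+1 : ℕ) : ℝ) / 2 ^ (n+1) = ((j:ℝ)/2^n + ((j+1:ℕ):ℝ)/2^n)/2 := by
          push_cast
          rw [← add_div, div_div]
          rw [div_eq_div_iff (by positivity) (by positivity)]
          ring
        rw [hcast]
        calc F (((j:ℝ)/2^n + ((j+1:ℕ):ℝ)/2^n)/2)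
            ≤ (F ((j:ℝ)/2^n) + F (((j+1:ℕ):ℝ)/2^n)) / 2 := hmidF _ hs₁ _ hs₂
          _ ≤ ((1 - (j:ℝ)/2^n) * F 0 + ((j:ℝ)/2^n) * F 1
              + ((1 - ((j+1:ℕ):ℝ)/2^n) * F 0 + (((j+1:ℕ):ℝ)/2^n) * F 1)) / 2 := by
              have h1 := ih j (le_of_lt hj2)
              have h2 := ih (j+1) hj2
              linarith
          _ = (1 - ((j:ℝ)/2^n + ((j+1:ℕ):ℝ)/2^n)/2) * F 0
              + (((j:ℝ)/2^n + ((j+1:ℕ):ℝ)/2^n)/2) * F 1 := by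
              push_cast
              ring
  -- real parameter by density
  intro t ht
  have hFlip : ∀ s ∈ Icc (0:ℝ) 1, ∀ u ∈ Icc (0:ℝ) 1, F u ≤ F s + |u - s| * (L + L') := by
    intro s hs u hu
    calc F u ≤ dist (γ u) (γ s) + dist (γ s) (σ s) + dist (σ s) (σ u) := by
          simp only [hF]
          have t1 := dist_triangle (γ u) (γ s) (σ u)
          have t2 := dist_triangle (γ s) (σ s) (σ u)
          linarith
      _ = F s + (|u - s| * L + |s - u| * L') := by
          rw [hγ u hu s hs, hσ s hs u hu, hF]
          ring
      _ = F s + |u - s| * (L + L') := by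
          rw [abs_sub_comm s u]
          ring
  set tn : ℕ → ℝ := fun n => (⌊t * 2 ^ n⌋₊ : ℝ) / 2 ^ n with htn
  have htn_mem : ∀ n, tn n ∈ Icc (0:ℝ) 1 := by
    intro n
    constructor
    · positivity
    · rw [div_le_one (by positivity)]
      have h0 : (0:ℝ) ≤ t * 2 ^ n := mul_nonneg ht.1 (by positivity)
      calc (⌊t * 2 ^ n⌋₊ : ℝ) ≤ t * 2 ^ n := Nat.floor_le h0
        _ ≤ 2 ^ n := by nlinarith [ht.2, (by positivity : (0:ℝ) < 2^n)]
  have htends : Tendsto tn atTop (𝓝 t) := dyadic_tendsto ht.1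
  have hbound : ∀ n, F t ≤ (1 - tn n) * F 0 + (tn n) * F 1 + |t - tn n| * (L + L') := by
    intro n
    have h1 := hFlip (tn n) (htn_mem n) t ht
    have h2 := hdy n ⌊t * 2 ^ n⌋₊ (by
      apply Nat.floor_le_of_le
      have hp : (0:ℝ) < 2^n := by positivity
      calc t * 2^n ≤ 1 * 2^n := by nlinarith [ht.2]
        _ = ((2^n : ℕ) : ℝ) := by push_cast; ring)
    linarith [h2]
  have hlim : Tendsto (fun n => (1 - tn n) * F 0 + (tn n) * F 1 + |t - tn n| * (L + L'))
      atTop (𝓝 ((1 - t) * F 0 + t * F 1 + |t - t| * (L + L'))) := by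
    have h1 : Tendsto (fun n => t - tn n) atTop (𝓝 (t - t)) :=
      tendsto_const_nhds.sub htends
    exact ((((tendsto_const_nhds (x := (1:ℝ))).sub htends).mul tendsto_const_nhds).add
        (htends.mul tendsto_const_nhds)).add ((h1.abs).mul tendsto_const_nhds)
  have hfin := ge_of_tendsto hlim (Eventually.of_forall hbound)
  simp only [sub_self, abs_zero, zero_mul, add_zero] at hfin
  exact hfin

/-- The closed `M`-neighborhood of a midpoint-convex set is midpoint-convex. -/
lemma nbhd_midptConvex (hgeo : HasMidpoints X) (hcat : IsCAT0 X)
    (C : Set X) (hC : MidptConvex C) (hCne : C.Nonempty) (M : ℝ) :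
    MidptConvex {z : X | Metric.infDist z C ≤ M} := by
  intro u hu v hv mm h1 h2
  simp only [Set.mem_setOf_eq] at hu hv ⊢
  refine le_of_forall_pos_le_add ?_
  intro ε hε
  obtain ⟨p, hpC, hp⟩ : ∃ p ∈ C, dist u p < M + ε/2 := by
    have : Metric.infDist u C < M + ε/2 := by linarith
    exact (Metric.infDist_lt_iff hCne).1 this
  obtain ⟨q, hqC, hq⟩ : ∃ q ∈ C, dist v q < M + ε/2 := by
    have : Metric.infDist v C < M + ε/2 := by linarith
    exact (Metric.infDist_lt_iff hCne).1 this
  obtain ⟨w, hw1, hw2⟩ := hgeo p q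
  have hwC : w ∈ C := hC p hpC q hqC w hw1 hw2
  have hjm : dist mm w ≤ (dist u p + dist v q) / 2 :=
    cat0_jointMid hgeo hcat h1 h2 hw1 hw2
  calc Metric.infDist mm C ≤ dist mm w := Metric.infDist_le_dist_of_mem hwC
    _ ≤ (dist u p + dist v q) / 2 := hjm
    _ ≤ M + ε := by linarith

/-- Coset representatives give a uniform bound on the distance from an `H`-orbit to the
orbit of a finite-index subgroup. -/
lemma orbit_bound (H H' : Subgroup (X ≃ᵢ X)) (hrel : H'.relIndex H ≠ 0) (x : X) :
    ∃ R : ℝ, ∀ g : X ≃ᵢ X, g ∈ H → ∃ k : X ≃ᵢ X, k ∈ H ∧ k ∈ H' ∧ dist (g x) (k x) ≤ R := by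
  classical
  set K : Subgroup H := H'.subgroupOf H with hK
  have hfin : Finite (H ⧸ K) := by
    have : Nat.card (H ⧸ K) ≠ 0 := hrel
    exact (Nat.card_ne_zero.mp this).2
  set f : H ⧸ K → ℝ := fun c => dist (((Quotient.out c : H) : X ≃ᵢ X)⁻¹ x) x with hf
  obtain ⟨R, hR⟩ := (Set.finite_range f).bddAbove
  refine ⟨R, ?_⟩
  intro g hg
  set gH : H := ⟨g, hg⟩ with hgH
  set c : H ⧸ K := QuotientGroup.mk gH⁻¹ with hc
  set r : H := Quotient.out c with hr
  have hrel1 : QuotientGroup.mk r = c := by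
    rw [hr]
    exact Quotient.out_eq c
  have hmem : r⁻¹ * gH⁻¹ ∈ K := by
    have : (QuotientGroup.mk r : H ⧸ K) = QuotientGroup.mk gH⁻¹ := by rw [hrel1, hc]
    exact (QuotientGroup.eq).1 this
  set k : H := gH * r with hk
  have hkK : k⁻¹ ∈ K := by
    have : k⁻¹ = r⁻¹ * gH⁻¹ := by rw [hk]; group
    rw [this]; exact hmem
  have hkK' : k ∈ K := (inv_mem_iff).1 hkK
  have hkH' : (k : X ≃ᵢ X) ∈ H' := by
    rw [hK] at hkK'
    exact (Subgroup.mem_subgroupOf).1 hkK'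
  refine ⟨(k : X ≃ᵢ X), k.2, hkH', ?_⟩
  have hgk : g = (k : X ≃ᵢ X) * ((r : X ≃ᵢ X))⁻¹ := by
    have : gH = k * r⁻¹ := by rw [hk]; group
    have h2 := congrArg (Subtype.val) this
    simpa using h2
  rw [hgk]
  have : ((k : X ≃ᵢ X) * ((r : X ≃ᵢ X))⁻¹) x = (k : X ≃ᵢ X) (((r : X ≃ᵢ X))⁻¹ x) := rfl
  rw [this]
  have hiso : dist ((k : X ≃ᵢ X) (((r : X ≃ᵢ X))⁻¹ x)) ((k : X ≃ᵢ X) x)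
      = dist (((r : X ≃ᵢ X))⁻¹ x) x := (k : X ≃ᵢ X).isometry.dist_eq _ _
  rw [hiso]
  exact hR ⟨c, rfl⟩

lemma ray_exists [CompleteSpace X] (hgeo : HasMidpoints X) (hcat : IsCAT0 X)
    (Y' : Set X) (hcl : IsClosed Y') (hcv : MidptConvex Y') (hne : Y'.Nonempty)
    (c : ℝ≥0 → X) (hc : IsGeodesicRay c) (M : ℝ) (hM : 1 ≤ M)
    (hbd : ∀ t : ℝ≥0, Metric.infDist (c t) Y' ≤ M) :
    ∃ c' : ℝ≥0 → X, IsGeodesicRay c' ∧ Set.range c' ⊆ Y' ∧ AsymptoticRays c c' := by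
  classical
  set M₁ : ℝ := M + 1 with hM₁
  have hM₁pos : 0 < M₁ := by linarith
  have hP : ∀ n : ℕ, ∃ p, p ∈ Y' ∧ dist (c (n : ℝ≥0)) p ≤ M₁ := by
    intro n
    have h1 : Metric.infDist (c (n : ℝ≥0)) Y' < M₁ := by
      have := hbd (n : ℝ≥0); linarith
    obtain ⟨p, hp1, hp2⟩ := (Metric.infDist_lt_iff hne).1 h1
    exact ⟨p, hp1, le_of_lt hp2⟩
  choose P hPmem hPdist using hP
  set p : X := P 0 with hp
  set L : ℕ → ℝ := fun n => dist p (P n) with hL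
  have hc0n : ∀ n : ℕ, dist (c (0 : ℝ≥0)) (c (n : ℝ≥0)) = n := by
    intro n
    rw [hc 0 n]
    push_cast
    simp
  have hLlow : ∀ n : ℕ, (n : ℝ) - 2 * M₁ ≤ L n := by
    intro n
    have e1 : dist (c (0:ℝ≥0)) (c (n:ℝ≥0)) ≤ dist (c (0:ℝ≥0)) p + dist p (c (n:ℝ≥0)) :=
      dist_triangle _ _ _
    have e2 : dist p (c (n:ℝ≥0)) ≤ dist p (P n) + dist (P n) (c (n:ℝ≥0)) := dist_triangle _ _ _
    have e3 : dist (P n) (c (n:ℝ≥0)) = dist (c (n:ℝ≥0)) (P n) := dist_comm _ _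
    have h1 : dist (c (0:ℝ≥0)) p ≤ M₁ := by
      have := hPdist 0
      simpa [hp] using this
    have h2 : dist (c (n:ℝ≥0)) (P n) ≤ M₁ := hPdist n
    have h3 := hc0n n
    show (n : ℝ) - 2 * M₁ ≤ dist p (P n)
    linarith
  have hLhigh : ∀ n : ℕ, L n ≤ (n : ℝ) + 2 * M₁ := by
    intro n
    have e1 : dist p (P n) ≤ dist p (c (n:ℝ≥0)) + dist (c (n:ℝ≥0)) (P n) := dist_triangle _ _ _
    have e2 : dist p (c (n:ℝ≥0)) ≤ dist p (c (0:ℝ≥0)) + dist (c (0:ℝ≥0)) (c (n:ℝ≥0)) :=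
      dist_triangle _ _ _
    have e4 : dist p (c (0:ℝ≥0)) = dist (c (0:ℝ≥0)) p := dist_comm _ _
    have h1 : dist (c (0:ℝ≥0)) p ≤ M₁ := by
      have := hPdist 0
      simpa [hp] using this
    have h2 : dist (c (n:ℝ≥0)) (P n) ≤ M₁ := hPdist n
    have h3 := hc0n n
    show dist p (P n) ≤ (n : ℝ) + 2 * M₁
    linarith
  have hLabs : ∀ n : ℕ, |(n : ℝ) - L n| ≤ 2 * M₁ := by
    intro n
    rw [abs_le]
    constructor <;> [linarith [hLhigh n]; linarith [hLlow n]]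
  have hγex : ∀ n : ℕ, ∃ γ : ℝ → X, γ 0 = p ∧ γ 1 = P n ∧
      (∀ s ∈ Icc (0:ℝ) 1, ∀ t ∈ Icc (0:ℝ) 1, dist (γ s) (γ t) = |s - t| * L n) ∧
      (∀ t ∈ Icc (0:ℝ) 1, γ t ∈ Y') := by
    intro n
    obtain ⟨γ, h0, h1, hd, hmem⟩ := geo_exists hgeo p (P n)
    exact ⟨γ, h0, h1, hd, hmem Y' hcl hcv (hPmem 0) (hPmem n)⟩
  choose γ hγ0 hγ1 hγd hγY using hγex
  -- the geodesic ray `c` rescaled to `[0,1]`, stopping at time `n`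
  have hσray : ∀ n : ℕ, ∀ s ∈ Icc (0:ℝ) 1, ∀ t ∈ Icc (0:ℝ) 1,
      dist (c (Real.toNNReal (s * n))) (c (Real.toNNReal (t * n)))
        = |s - t| * (n : ℝ) := by
    intro n s hs t ht
    rw [hc]
    rw [Real.coe_toNNReal _ (mul_nonneg hs.1 (by positivity)),
      Real.coe_toNNReal _ (mul_nonneg ht.1 (by positivity))]
    rw [show s * n - t * n = (s - t) * n by ring, abs_mul]
    congr 1
    exact abs_of_nonneg (by positivity)
  -- E1 : the geodesics `γ n` track the ray
  have E1 : ∀ n : ℕ, ∀ s ∈ Icc (0:ℝ) 1,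
      dist (γ n s) (c (Real.toNNReal (s * n))) ≤ M₁ := by
    intro n s hs
    have hconv := geodesic_convexity hgeo hcat (hγd n) (hσray n) s hs
    have h00 : Real.toNNReal ((0:ℝ) * n) = (0 : ℝ≥0) := by simp
    have h11 : Real.toNNReal ((1:ℝ) * n) = ((n:ℕ) : ℝ≥0) := by
      rw [one_mul]
      simp
    rw [h00, h11, hγ0, hγ1] at hconv
    have hb0 : dist p (c (0:ℝ≥0)) ≤ M₁ := by
      rw [dist_comm]
      have := hPdist 0
      simpa [hp] using this
    have hb1 : dist (P n) (c ((n:ℕ) : ℝ≥0)) ≤ M₁ := by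
      rw [dist_comm]
      exact hPdist n
    nlinarith [hconv, hs.1, hs.2, hb0, hb1]
  -- pairwise comparison of points at arclength t on γ n and γ n'
  have hpair : ∀ (t : ℝ) (n n' : ℕ), 0 ≤ t → t ≤ L n → t ≤ L n' → 0 < L n → 0 < L n' →
      dist (γ n (t / L n)) (γ n' (t / L n')) ≤ 6 * M₁ * t / min (L n) (L n') := by
    intro t n n' ht htn htn' hLn hLn'
    set T : ℝ := min (L n) (L n') with hT
    have hT0 : 0 < T := lt_min hLn hLn'
    have htT : t ≤ T := le_min htn htn'
    have hTn : T ≤ L n := min_le_left _ _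
    have hTn' : T ≤ L n' := min_le_right _ _
    set σ₁ : ℝ → X := fun s => γ n (s * (T / L n)) with hσ₁
    set σ₂ : ℝ → X := fun s => γ n' (s * (T / L n')) with hσ₂
    have hfrac : ∀ s ∈ Icc (0:ℝ) 1, s * (T / L n) ∈ Icc (0:ℝ) 1 := by
      intro s hs
      constructor
      · exact mul_nonneg hs.1 (by positivity)
      · calc s * (T / L n) ≤ 1 * (T / L n) :=
            mul_le_mul_of_nonneg_right hs.2 (by positivity)
          _ = T / L n := one_mul _
          _ ≤ 1 := by rw [div_le_one hLn]; exact hTn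
    have hfrac' : ∀ s ∈ Icc (0:ℝ) 1, s * (T / L n') ∈ Icc (0:ℝ) 1 := by
      intro s hs
      constructor
      · exact mul_nonneg hs.1 (by positivity)
      · calc s * (T / L n') ≤ 1 * (T / L n') :=
            mul_le_mul_of_nonneg_right hs.2 (by positivity)
          _ = T / L n' := one_mul _
          _ ≤ 1 := by rw [div_le_one hLn']; exact hTn'
    have hσ₁d : ∀ s ∈ Icc (0:ℝ) 1, ∀ s' ∈ Icc (0:ℝ) 1,
        dist (σ₁ s) (σ₁ s') = |s - s'| * T := by
      intro s hs s' hs'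
      show dist (γ n (s * (T / L n))) (γ n (s' * (T / L n))) = |s - s'| * T
      rw [hγd n _ (hfrac s hs) _ (hfrac s' hs')]
      rw [show s * (T / L n) - s' * (T / L n) = (s - s') * (T / L n) by ring, abs_mul,
        abs_of_nonneg (by positivity : (0:ℝ) ≤ T / L n)]
      rw [mul_assoc, div_mul_cancel₀ _ (ne_of_gt hLn)]
    have hσ₂d : ∀ s ∈ Icc (0:ℝ) 1, ∀ s' ∈ Icc (0:ℝ) 1,
        dist (σ₂ s) (σ₂ s') = |s - s'| * T := by
      intro s hs s' hs'
      show dist (γ n' (s * (T / L n'))) (γ n' (s' * (T / L n'))) = |s - s'| * T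
      rw [hγd n' _ (hfrac' s hs) _ (hfrac' s' hs')]
      rw [show s * (T / L n') - s' * (T / L n') = (s - s') * (T / L n') by ring, abs_mul,
        abs_of_nonneg (by positivity : (0:ℝ) ≤ T / L n')]
      rw [mul_assoc, div_mul_cancel₀ _ (ne_of_gt hLn')]
    -- endpoint estimate
    have hends : dist (σ₁ 1) (σ₂ 1) ≤ 6 * M₁ := by
      have hmem1 : T / L n ∈ Icc (0:ℝ) 1 := by
        simpa using hfrac 1 ⟨zero_le_one, le_refl _⟩
      have hmem2 : T / L n' ∈ Icc (0:ℝ) 1 := by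
        simpa using hfrac' 1 ⟨zero_le_one, le_refl _⟩
      have e1 : dist (γ n (T / L n)) (c (Real.toNNReal ((T / L n) * n))) ≤ M₁ :=
        E1 n _ hmem1
      have e2 : dist (γ n' (T / L n')) (c (Real.toNNReal ((T / L n') * n'))) ≤ M₁ :=
        E1 n' _ hmem2
      have emid : dist (c (Real.toNNReal ((T / L n) * n))) (c (Real.toNNReal ((T / L n') * n')))
          ≤ 4 * M₁ := by
        rw [hc]
        rw [Real.coe_toNNReal _ (mul_nonneg hmem1.1 (by positivity)),
          Real.coe_toNNReal _ (mul_nonneg hmem2.1 (by positivity))]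
        have k1 : |T / L n * n - T| ≤ 2 * M₁ := by
          rw [show T / L n * n - T = (T / L n) * ((n:ℝ) - L n) by field_simp, abs_mul,
            abs_of_nonneg hmem1.1]
          calc T / L n * |(n:ℝ) - L n| ≤ 1 * (2 * M₁) :=
                mul_le_mul hmem1.2 (hLabs n) (abs_nonneg _) zero_le_one
            _ = 2 * M₁ := one_mul _
        have k2 : |T / L n' * n' - T| ≤ 2 * M₁ := by
          rw [show T / L n' * n' - T = (T / L n') * ((n':ℝ) - L n') by field_simp, abs_mul,
            abs_of_nonneg hmem2.1]
          calc T / L n' * |(n':ℝ) - L n'| ≤ 1 * (2 * M₁) :=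
                mul_le_mul hmem2.2 (hLabs n') (abs_nonneg _) zero_le_one
            _ = 2 * M₁ := one_mul _
        calc |T / L n * n - T / L n' * n'|
            ≤ |T / L n * n - T| + |T - T / L n' * n'| := abs_sub_le _ _ _
          _ ≤ 2 * M₁ + 2 * M₁ := by
              rw [abs_sub_comm T (T / L n' * n')]
              linarith
          _ = 4 * M₁ := by ring
      have hs1 : σ₁ 1 = γ n (T / L n) := by rw [hσ₁]; simp
      have hs2 : σ₂ 1 = γ n' (T / L n') := by rw [hσ₂]; simp
      rw [hs1, hs2]
      calc dist (γ n (T / L n)) (γ n' (T / L n'))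
          ≤ dist (γ n (T / L n)) (c (Real.toNNReal ((T / L n) * n)))
            + dist (c (Real.toNNReal ((T / L n) * n))) (c (Real.toNNReal ((T / L n') * n')))
            + dist (c (Real.toNNReal ((T / L n') * n'))) (γ n' (T / L n')) := by
              have := dist_triangle4 (γ n (T / L n)) (c (Real.toNNReal ((T / L n) * n)))
                (c (Real.toNNReal ((T / L n') * n'))) (γ n' (T / L n'))
              linarith
        _ ≤ M₁ + 4 * M₁ + M₁ := by
            rw [dist_comm (c (Real.toNNReal ((T / L n') * n')))]
            linarith
        _ = 6 * M₁ := by ring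
    have hstart : dist (σ₁ 0) (σ₂ 0) = 0 := by
      have hs1 : σ₁ 0 = p := by rw [hσ₁]; simp [hγ0 n]
      have hs2 : σ₂ 0 = p := by rw [hσ₂]; simp [hγ0 n']
      rw [hs1, hs2, dist_self]
    have hmemtT : t / T ∈ Icc (0:ℝ) 1 := by
      constructor
      · positivity
      · rw [div_le_one hT0]; exact htT
    have hconv := geodesic_convexity hgeo hcat hσ₁d hσ₂d (t / T) hmemtT
    rw [hstart] at hconv
    have hv1 : σ₁ (t / T) = γ n (t / L n) := by
      rw [hσ₁]
      simp only
      congr 1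
      field_simp
    have hv2 : σ₂ (t / T) = γ n' (t / L n') := by
      rw [hσ₂]
      simp only
      congr 1
      field_simp
    rw [hv1, hv2] at hconv
    calc dist (γ n (t / L n)) (γ n' (t / L n'))
        ≤ (1 - t / T) * 0 + t / T * dist (σ₁ 1) (σ₂ 1) := hconv
      _ = t / T * dist (σ₁ 1) (σ₂ 1) := by ring
      _ ≤ t / T * (6 * M₁) := by
          apply mul_le_mul_of_nonneg_left hends (by positivity)
      _ = 6 * M₁ * t / T := by ring
  -- the approximating points and their limit
  set u : ℕ → ℝ≥0 → X :=
    fun n t => if h : (t:ℝ) ≤ L n ∧ 0 < L n then γ n ((t:ℝ) / L n) else p with hu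
  have hu_eq : ∀ n (t : ℝ≥0), (t:ℝ) ≤ L n → 0 < L n → u n t = γ n ((t:ℝ) / L n) := by
    intro n t h1 h2
    rw [hu]
    simp only
    rw [dif_pos ⟨h1, h2⟩]
  have hgood : ∀ (t : ℝ≥0) (n : ℕ), (t:ℝ) + 2*M₁ + 1 ≤ n → ((t:ℝ) ≤ L n ∧ 0 < L n) := by
    intro t n hn
    have := hLlow n
    have ht0 : (0:ℝ) ≤ (t:ℝ) := t.coe_nonneg
    constructor <;> linarith
  have hcauchy : ∀ t : ℝ≥0, CauchySeq (fun n => u n t) := by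
    intro t
    rw [Metric.cauchySeq_iff]
    intro ε hε
    obtain ⟨N, hN⟩ := exists_nat_gt (max ((t:ℝ) + 2*M₁ + 1) (2*M₁ + 6*M₁*(t:ℝ)/ε))
    have hN1 : (t:ℝ) + 2*M₁ + 1 ≤ N := le_of_lt (lt_of_le_of_lt (le_max_left _ _) hN)
    have hN2 : 2*M₁ + 6*M₁*(t:ℝ)/ε < N := lt_of_le_of_lt (le_max_right _ _) hN
    refine ⟨N, ?_⟩
    intro a ha b hb
    have hNa : (t:ℝ) + 2*M₁ + 1 ≤ a := le_trans hN1 (by exact_mod_cast ha)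
    have hNb : (t:ℝ) + 2*M₁ + 1 ≤ b := le_trans hN1 (by exact_mod_cast hb)
    obtain ⟨ha1, ha2⟩ := hgood t a hNa
    obtain ⟨hb1, hb2⟩ := hgood t b hNb
    rw [hu_eq a t ha1 ha2, hu_eq b t hb1 hb2]
    have hkey := hpair (t:ℝ) a b t.coe_nonneg ha1 hb1 ha2 hb2
    have hTbig : (N:ℝ) - 2*M₁ ≤ min (L a) (L b) := by
      apply le_min
      · have := hLlow a
        have : (N:ℝ) ≤ a := by exact_mod_cast ha
        linarith [hLlow a]
      · have : (N:ℝ) ≤ b := by exact_mod_cast hb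
        linarith [hLlow b]
    have hT0 : (0:ℝ) < (N:ℝ) - 2*M₁ := by
      have ht0 : (0:ℝ) ≤ (t:ℝ) := t.coe_nonneg
      have h6 : (0:ℝ) ≤ 6*M₁*(t:ℝ)/ε := by positivity
      linarith
    have hmin0 : (0:ℝ) < min (L a) (L b) := lt_of_lt_of_le hT0 hTbig
    have hstep : 6 * M₁ * (t:ℝ) / min (L a) (L b) ≤ 6 * M₁ * (t:ℝ) / ((N:ℝ) - 2*M₁) := by
      apply div_le_div_of_nonneg_left _ hT0 hTbig
      positivity
    have hfin : 6 * M₁ * (t:ℝ) / ((N:ℝ) - 2*M₁) < ε := by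
      rw [div_lt_iff₀ hT0]
      have : 6*M₁*(t:ℝ)/ε < (N:ℝ) - 2*M₁ := by linarith
      calc 6 * M₁ * (t:ℝ) = (6*M₁*(t:ℝ)/ε) * ε := by field_simp
        _ < ((N:ℝ) - 2*M₁) * ε := mul_lt_mul_of_pos_right this hε
        _ = ε * ((N:ℝ) - 2*M₁) := by ring
    calc dist (γ a ((t:ℝ) / L a)) (γ b ((t:ℝ) / L b)) ≤ 6 * M₁ * (t:ℝ) / min (L a) (L b) := hkey
      _ ≤ 6 * M₁ * (t:ℝ) / ((N:ℝ) - 2*M₁) := hstep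
      _ < ε := hfin
  have hlimex : ∀ t : ℝ≥0, ∃ y : X, Tendsto (fun n => u n t) atTop (𝓝 y) :=
    fun t => cauchySeq_tendsto_of_complete (hcauchy t)
  set c' : ℝ≥0 → X := fun t => (hlimex t).choose with hc'def
  have hc' : ∀ t, Tendsto (fun n => u n t) atTop (𝓝 (c' t)) := fun t => (hlimex t).choose_spec
  refine ⟨c', ?_, ?_, ?_⟩
  · -- geodesic ray
    intro s t
    have hev : ∀ᶠ n in atTop, dist (u n s) (u n t) = |(s:ℝ) - (t:ℝ)| := by
      rw [eventually_atTop]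
      obtain ⟨N, hN⟩ := exists_nat_gt (max ((s:ℝ) + 2*M₁ + 1) ((t:ℝ) + 2*M₁ + 1))
      refine ⟨N, ?_⟩
      intro n hn
      have hn' : (N:ℝ) ≤ n := by exact_mod_cast hn
      have hs' : (s:ℝ) + 2*M₁ + 1 ≤ n := le_trans (le_trans (le_max_left _ _) (le_of_lt hN)) hn'
      have ht' : (t:ℝ) + 2*M₁ + 1 ≤ n := le_trans (le_trans (le_max_right _ _) (le_of_lt hN)) hn'
      obtain ⟨hs1, hs2⟩ := hgood s n hs'
      obtain ⟨ht1, ht2⟩ := hgood t n ht'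
      rw [hu_eq n s hs1 hs2, hu_eq n t ht1 ht2]
      have hmems : (s:ℝ) / L n ∈ Icc (0:ℝ) 1 := by
        constructor
        · positivity
        · rw [div_le_one hs2]; exact hs1
      have hmemt : (t:ℝ) / L n ∈ Icc (0:ℝ) 1 := by
        constructor
        · positivity
        · rw [div_le_one ht2]; exact ht1
      rw [hγd n _ hmems _ hmemt]
      rw [show (s:ℝ) / L n - (t:ℝ) / L n = ((s:ℝ) - (t:ℝ)) / L n by ring, abs_div,
        abs_of_pos hs2, div_mul_cancel₀ _ (ne_of_gt hs2)]
    have h1 : Tendsto (fun n => dist (u n s) (u n t)) atTop (𝓝 (dist (c' s) (c' t))) :=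
      (hc' s).dist (hc' t)
    have h2 : Tendsto (fun n => dist (u n s) (u n t)) atTop (𝓝 (|(s:ℝ) - (t:ℝ)|)) := by
      refine Tendsto.congr' ?_ (tendsto_const_nhds (x := |(s:ℝ) - (t:ℝ)|))
      exact hev.mono fun n h => h.symm
    exact tendsto_nhds_unique h1 h2
  · -- range in Y'
    rintro y ⟨t, rfl⟩
    apply hcl.mem_of_tendsto (hc' t)
    rw [eventually_atTop]
    obtain ⟨N, hN⟩ := exists_nat_gt ((t:ℝ) + 2*M₁ + 1)
    refine ⟨N, ?_⟩
    intro n hn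
    have hn' : (t:ℝ) + 2*M₁ + 1 ≤ n :=
      le_trans (le_of_lt hN) (by exact_mod_cast hn)
    obtain ⟨ht1, ht2⟩ := hgood t n hn'
    rw [hu_eq n t ht1 ht2]
    apply hγY n
    constructor
    · positivity
    · rw [div_le_one ht2]; exact ht1
  · -- asymptotic
    refine ⟨M₁, ?_⟩
    intro t
    have hseq : Tendsto (fun n => dist (c t) (u n t)) atTop (𝓝 (dist (c t) (c' t))) :=
      tendsto_const_nhds.dist (hc' t)
    have hLtop : Tendsto (fun n : ℕ => L n) atTop atTop := by
      apply tendsto_atTop_mono hLlow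
      apply tendsto_atTop_add_const_right
      exact tendsto_natCast_atTop_atTop
    have hbnd : Tendsto (fun n : ℕ => M₁ + 2 * M₁ * (t:ℝ) / L n) atTop (𝓝 (M₁ + 0)) := by
      apply Tendsto.add tendsto_const_nhds
      exact Tendsto.div_atTop tendsto_const_nhds hLtop
    have hle : ∀ᶠ n in atTop, dist (c t) (u n t) ≤ M₁ + 2 * M₁ * (t:ℝ) / L n := by
      rw [eventually_atTop]
      obtain ⟨N, hN⟩ := exists_nat_gt ((t:ℝ) + 2*M₁ + 1)
      refine ⟨N, ?_⟩
      intro n hn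
      have hn' : (t:ℝ) + 2*M₁ + 1 ≤ n := le_trans (le_of_lt hN) (by exact_mod_cast hn)
      obtain ⟨ht1, ht2⟩ := hgood t n hn'
      rw [hu_eq n t ht1 ht2]
      have hmem : (t:ℝ) / L n ∈ Icc (0:ℝ) 1 := by
        constructor
        · positivity
        · rw [div_le_one ht2]; exact ht1
      have e1 : dist (γ n ((t:ℝ)/L n)) (c (Real.toNNReal (((t:ℝ)/L n) * n))) ≤ M₁ :=
        E1 n _ hmem
      have e2 : dist (c t) (c (Real.toNNReal (((t:ℝ)/L n) * n))) ≤ 2 * M₁ * (t:ℝ) / L n := by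
        rw [hc]
        rw [Real.coe_toNNReal _ (mul_nonneg hmem.1 (by positivity))]
        rw [show (t:ℝ) - (t:ℝ)/L n * n = ((t:ℝ)/L n) * (L n - (n:ℝ)) from by field_simp]
        rw [abs_mul, abs_of_nonneg hmem.1]
        have : |L n - (n:ℝ)| ≤ 2 * M₁ := by
          rw [abs_sub_comm]
          exact hLabs n
        calc (t:ℝ)/L n * |L n - (n:ℝ)| ≤ (t:ℝ)/L n * (2*M₁) :=
              mul_le_mul_of_nonneg_left this hmem.1
          _ = 2 * M₁ * (t:ℝ) / L n := by ring
      calc dist (c t) (γ n ((t:ℝ)/L n))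
          ≤ dist (c t) (c (Real.toNNReal (((t:ℝ)/L n) * n)))
            + dist (c (Real.toNNReal (((t:ℝ)/L n) * n))) (γ n ((t:ℝ)/L n)) := dist_triangle _ _ _
        _ ≤ 2 * M₁ * (t:ℝ) / L n + M₁ := by
            rw [dist_comm (c (Real.toNNReal (((t:ℝ)/L n) * n)))]
            linarith
        _ = M₁ + 2 * M₁ * (t:ℝ) / L n := by ring
    have := le_of_tendsto_of_tendsto hseq hbnd hle
    simpa using this

lemma hull_closed {S : Set X} : IsClosed (metricClosedConvexHull S) :=
  isClosed_sInter fun _ hC => hC.1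

lemma hull_midptConvex {S : Set X} : MidptConvex (metricClosedConvexHull S) := by
  intro a ha b hb mm h1 h2
  simp only [metricClosedConvexHull, Set.mem_sInter]
  intro C hC
  exact hC.2.1 a (ha C hC) b (hb C hC) mm h1 h2

lemma subset_hull {S : Set X} : S ⊆ metricClosedConvexHull S := by
  intro z hz
  simp only [metricClosedConvexHull, Set.mem_sInter]
  intro C hC
  exact hC.2.2 hz

lemma hull_min {S C : Set X} (h1 : IsClosed C) (h2 : MidptConvex C) (h3 : S ⊆ C) :
    metricClosedConvexHull S ⊆ C :=
  Set.sInter_subset_of_mem ⟨h1, h2, h3⟩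


end AuxStmt16

/-- Let `X` be a proper CAT(0) space and let `H, H'` be commensurable subgroups of
`Isom(X)`.  If `Y` (resp. `Y'`) is the closed convex hull of an `H`-orbit (resp. an
`H'`-orbit), then the visual boundaries `∂Y` and `∂Y'` coincide as subsets of `∂X`:
every geodesic ray in `Y` is asymptotic to one in `Y'` and conversely.  In particular the
convex limit set `ΔH = ∂Y` is well-defined and invariant under commensuration. -/
theorem stmt16 {X : Type*} [MetricSpace X] [ProperSpace X] [CompleteSpace X]
    (hgeo : HasMidpoints X) (hcat : IsCAT0 X)
    (H H' : Subgroup (X ≃ᵢ X)) (hcomm : Subgroup.Commensurable H H')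
    (x x' : X)
    (Y Y' : Set X)
    (hY : Y = metricClosedConvexHull {y : X | ∃ g ∈ H, y = g x})
    (hY' : Y' = metricClosedConvexHull {y : X | ∃ g ∈ H', y = g x'}) :
    (∀ c : ℝ≥0 → X, IsGeodesicRay c → Set.range c ⊆ Y →
      ∃ c' : ℝ≥0 → X, IsGeodesicRay c' ∧ Set.range c' ⊆ Y' ∧ AsymptoticRays c c') ∧
    (∀ c' : ℝ≥0 → X, IsGeodesicRay c' → Set.range c' ⊆ Y' →
      ∃ c : ℝ≥0 → X, IsGeodesicRay c ∧ Set.range c ⊆ Y ∧ AsymptoticRays c c') := by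
  classical
  set S : Set X := {y : X | ∃ g ∈ H, y = g x} with hS
  set S' : Set X := {y : X | ∃ g ∈ H', y = g x'} with hS'
  have hxS : x ∈ S := ⟨1, H.one_mem, rfl⟩
  have hxS' : x' ∈ S' := ⟨1, H'.one_mem, rfl⟩
  have hYc : IsClosed Y := by rw [hY]; exact hull_closed
  have hY'c : IsClosed Y' := by rw [hY']; exact hull_closed
  have hYcv : MidptConvex Y := by rw [hY]; exact hull_midptConvex
  have hY'cv : MidptConvex Y' := by rw [hY']; exact hull_midptConvex
  have hSY : S ⊆ Y := by rw [hY]; exact subset_hull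
  have hSY' : S' ⊆ Y' := by rw [hY']; exact subset_hull
  have hYne : Y.Nonempty := ⟨x, hSY hxS⟩
  have hY'ne : Y'.Nonempty := ⟨x', hSY' hxS'⟩
  obtain ⟨R, hR⟩ := orbit_bound H H' hcomm.2 x
  obtain ⟨R', hR'⟩ := orbit_bound H' H hcomm.1 x'
  set Mb : ℝ := max (max R R') 0 + dist x x' + 1 with hMb
  have hMb1 : 1 ≤ Mb := by
    have h1 : (0:ℝ) ≤ max (max R R') 0 := le_max_right _ _
    have h2 : (0:ℝ) ≤ dist x x' := dist_nonneg
    rw [hMb]; linarith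
  -- each orbit is in the Mb-neighborhood of the other hull
  have hSbd : ∀ y ∈ S, Metric.infDist y Y' ≤ Mb := by
    rintro y ⟨g, hg, rfl⟩
    obtain ⟨k, hkH, hkH', hk⟩ := hR g hg
    have hmem : k x' ∈ Y' := hSY' ⟨k, hkH', rfl⟩
    have hdd : dist (k x) (k x') = dist x x' := k.isometry.dist_eq x x'
    calc Metric.infDist (g x) Y' ≤ dist (g x) (k x') := Metric.infDist_le_dist_of_mem hmem
      _ ≤ dist (g x) (k x) + dist (k x) (k x') := dist_triangle _ _ _
      _ ≤ R + dist x x' := by rw [hdd]; linarith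
      _ ≤ Mb := by
          have : R ≤ max (max R R') 0 := le_trans (le_max_left _ _) (le_max_left _ _)
          rw [hMb]; linarith
  have hS'bd : ∀ y ∈ S', Metric.infDist y Y ≤ Mb := by
    rintro y ⟨g, hg, rfl⟩
    obtain ⟨k, hkH', hkH, hk⟩ := hR' g hg
    have hmem : k x ∈ Y := hSY ⟨k, hkH, rfl⟩
    have hdd : dist (k x') (k x) = dist x' x := k.isometry.dist_eq x' x
    calc Metric.infDist (g x') Y ≤ dist (g x') (k x) := Metric.infDist_le_dist_of_mem hmem
      _ ≤ dist (g x') (k x') + dist (k x') (k x) := dist_triangle _ _ _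
      _ ≤ R' + dist x x' := by rw [hdd, dist_comm x' x]; linarith
      _ ≤ Mb := by
          have : R' ≤ max (max R R') 0 := le_trans (le_max_right _ _) (le_max_left _ _)
          rw [hMb]; linarith
  -- pass to the hulls
  have hYbd : ∀ y ∈ Y, Metric.infDist y Y' ≤ Mb := by
    have hsub : Y ⊆ {z : X | Metric.infDist z Y' ≤ Mb} := by
      rw [hY]
      apply hull_min
      · exact isClosed_le (Metric.continuous_infDist_pt Y') continuous_const
      · exact nbhd_midptConvex hgeo hcat Y' hY'cv hY'ne Mb
      · exact hSbd
    exact fun y hy => hsub hy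
  have hY'bd : ∀ y ∈ Y', Metric.infDist y Y ≤ Mb := by
    have hsub : Y' ⊆ {z : X | Metric.infDist z Y ≤ Mb} := by
      rw [hY']
      apply hull_min
      · exact isClosed_le (Metric.continuous_infDist_pt Y) continuous_const
      · exact nbhd_midptConvex hgeo hcat Y hYcv hYne Mb
      · exact hS'bd
    exact fun y hy => hsub hy
  constructor
  · intro c hc hrange
    exact ray_exists hgeo hcat Y' hY'c hY'cv hY'ne c hc Mb hMb1
      (fun t => hYbd _ (hrange ⟨t, rfl⟩))
  · intro c' hc' hrange
    obtain ⟨cc, h1, h2, B, hB⟩ := ray_exists hgeo hcat Y hYc hYcv hYne c' hc' Mb hMb1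
      (fun t => hY'bd _ (hrange ⟨t, rfl⟩))
    exact ⟨cc, h1, h2, B, fun t => by rw [dist_comm]; exact hB t⟩
end
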